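/- arXiv:2403.11730 — 6 statements merged into one kernel-verified Lean document; each statement's English description precedes it below -/
import Mathlib

section
/- Let p ≥ 1, β > 0, let A and C be real p×p skew-symmetric matrices and B ∈ ℝ^{p×p}. Define the 2p×2p block matrices L = [[A, −Bᵀ],[B, C]] and X = [[2βA, −Bᵀ],[B, C]]. Then ‖X‖₂ ≤ (1 + |2β−1|)·‖L‖₂ and ‖L‖₂ ≤ (1 + |2β−1|/(2β))·‖X‖₂. -/
open Matrix

/-- Spectral norm: operator norm induced by the Euclidean vector norm. -/
noncomputable def specNorm {m n : Type*} [Fintype m] [Fintype n] [DecidableEq n]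
    (M : Matrix m n ℝ) : ℝ :=
  ‖LinearMap.toContinuousLinearMap (Matrix.toEuclideanLin M)‖

/-!
Write `D = [[A, 0], [0, 0]]`, so that `X = L + (2β - 1) D`. Compressing by the orthogonal
projection `P = [[1, 0], [0, 0]]` gives `D = P L P` and `2β D = P X P`, hence `‖D‖ ≤ ‖L‖` and
`2β ‖D‖ ≤ ‖X‖`; both inequalities then follow from the triangle inequality.
-/

section Perturbation

variable {E : Type*} [SeminormedAddCommGroup E] [NormedSpace ℝ E]

lemma norm_add_smul_le_of_norm_le {L D : E} (c : ℝ) (hD : ‖D‖ ≤ ‖L‖) :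
    ‖L + c • D‖ ≤ (1 + |c|) * ‖L‖ :=
  calc ‖L + c • D‖ ≤ ‖L‖ + |c| * ‖D‖ := by
        simpa only [norm_smul, Real.norm_eq_abs] using norm_add_le L (c • D)
    _ ≤ ‖L‖ + |c| * ‖L‖ := by gcongr
    _ = (1 + |c|) * ‖L‖ := by ring

lemma norm_sub_smul_le_of_mul_norm_le {X D : E} (c : ℝ) {k : ℝ} (hk : 0 < k)
    (hD : k * ‖D‖ ≤ ‖X‖) : ‖X - c • D‖ ≤ (1 + |c| / k) * ‖X‖ :=
  calc ‖X - c • D‖ ≤ ‖X‖ + |c| * ‖D‖ := by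
        simpa only [norm_smul, Real.norm_eq_abs] using norm_sub_le X (c • D)
    _ ≤ ‖X‖ + |c| * (‖X‖ / k) := by
        gcongr
        rwa [le_div_iff₀' hk]
    _ = (1 + |c| / k) * ‖X‖ := by ring

end Perturbation

namespace Matrix

open scoped Matrix.Norms.L2Operator

variable {𝕜 : Type*} [RCLike 𝕜] {m n : Type*} [Fintype m] [Fintype n] [DecidableEq m]
  [DecidableEq n]

lemma l2_opNorm_fromBlocks_one_zero_le_one :
    ‖(fromBlocks 1 0 0 0 : Matrix (m ⊕ n) (m ⊕ n) 𝕜)‖ ≤ 1 := by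
  rw [← diagonal_one, ← diagonal_zero, fromBlocks_diagonal, l2_opNorm_diagonal,
    pi_norm_le_iff_of_nonneg zero_le_one]
  rintro (i | i) <;> simp

lemma fromBlocks_one_zero_mul_mul_fromBlocks_one_zero (A : Matrix m m 𝕜) (B : Matrix m n 𝕜)
    (C : Matrix n m 𝕜) (D : Matrix n n 𝕜) :
    fromBlocks 1 0 0 0 * fromBlocks A B C D * fromBlocks 1 0 0 0 =
      (fromBlocks A 0 0 0 : Matrix (m ⊕ n) (m ⊕ n) 𝕜) := by
  simp [fromBlocks_multiply]

lemma l2_opNorm_fromBlocks_zero_le (A : Matrix m m 𝕜) (B : Matrix m n 𝕜) (C : Matrix n m 𝕜)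
    (D : Matrix n n 𝕜) : ‖fromBlocks A 0 0 (0 : Matrix n n 𝕜)‖ ≤ ‖fromBlocks A B C D‖ := by
  set P : Matrix (m ⊕ n) (m ⊕ n) 𝕜 := fromBlocks 1 0 0 0
  have hP : ‖P‖ ≤ 1 := l2_opNorm_fromBlocks_one_zero_le_one
  rw [← fromBlocks_one_zero_mul_mul_fromBlocks_one_zero A B C D]
  calc ‖P * fromBlocks A B C D * P‖ ≤ ‖P‖ * ‖fromBlocks A B C D‖ * ‖P‖ :=
        (l2_opNorm_mul _ _).trans (by gcongr; exact l2_opNorm_mul _ _)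
    _ ≤ 1 * ‖fromBlocks A B C D‖ * 1 := by gcongr
    _ = ‖fromBlocks A B C D‖ := by ring

end Matrix

open scoped Matrix.Norms.L2Operator in
lemma specNorm_eq_l2_opNorm {m n : Type*} [Fintype m] [Fintype n] [DecidableEq n]
    (M : Matrix m n ℝ) : specNorm M = ‖M‖ := rfl

open scoped Matrix.Norms.L2Operator in
theorem norm_comparison_L_X_general (p : ℕ) (β : ℝ) (hβ : 0 < β)
    (A B C : Matrix (Fin p) (Fin p) ℝ)
    (L X : Matrix (Fin p ⊕ Fin p) (Fin p ⊕ Fin p) ℝ)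
    (hL : L = Matrix.fromBlocks A (-Bᵀ) B C)
    (hX : X = Matrix.fromBlocks ((2 * β) • A) (-Bᵀ) B C) :
    specNorm X ≤ (1 + |2 * β - 1|) * specNorm L ∧
      specNorm L ≤ (1 + |2 * β - 1| / (2 * β)) * specNorm X := by
  simp only [specNorm_eq_l2_opNorm]
  set D : Matrix (Fin p ⊕ Fin p) (Fin p ⊕ Fin p) ℝ := fromBlocks A 0 0 0
  have hXL : X = L + (2 * β - 1) • D := by
    simp only [hX, hL, D, fromBlocks_smul, fromBlocks_add, smul_zero, add_zero]
    rw [sub_smul, one_smul, add_sub_cancel]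
  have hDL : ‖D‖ ≤ ‖L‖ := hL ▸ l2_opNorm_fromBlocks_zero_le A (-Bᵀ) B C
  have hDX : 2 * β * ‖D‖ ≤ ‖X‖ := by
    have hscale : fromBlocks ((2 * β) • A) 0 0 0 = (2 * β) • D := by
      simp only [D, fromBlocks_smul, smul_zero]
    have h := hX ▸ l2_opNorm_fromBlocks_zero_le ((2 * β) • A) (-Bᵀ) B C
    rwa [hscale, norm_smul, Real.norm_of_nonneg (by positivity)] at h
  refine ⟨hXL ▸ norm_add_smul_le_of_norm_le _ hDL, ?_⟩
  simpa only [hXL, add_sub_cancel_right] using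
    norm_sub_smul_le_of_mul_norm_le (X := X) (2 * β - 1) (by positivity) hDX

theorem norm_comparison_L_X (p : ℕ) (hp : 1 ≤ p) (β : ℝ) (hβ : 0 < β)
    (A B C : Matrix (Fin p) (Fin p) ℝ) (hA : Aᵀ = -A) (hC : Cᵀ = -C)
    (L X : Matrix (Fin p ⊕ Fin p) (Fin p ⊕ Fin p) ℝ)
    (hL : L = Matrix.fromBlocks A (-Bᵀ) B C)
    (hX : X = Matrix.fromBlocks ((2 * β) • A) (-Bᵀ) B C) :
    specNorm X ≤ (1 + |2 * β - 1|) * specNorm L ∧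
      specNorm L ≤ (1 + |2 * β - 1| / (2 * β)) * specNorm X :=
  norm_comparison_L_X_general p β hβ A B C L X hL hX
end

section
/- Let p ≥ 1, let β ≥ 1/2 and set τ := 1 − 2β (so τ ≤ 0). Let F ∈ ℝ^{p×p} be arbitrary, set S := (1/2)·I_p − (τ/12)·Fᵀ·F, and let E be a real p×p skew-symmetric matrix. If Â ∈ ℝ^{p×p} solves the Sylvester equation S·Â + Â·S = E, then ‖Â‖₂ ≤ ‖E‖₂. -/
open Matrix
open scoped RealInnerProductSpace

section aux
variable {p : ℕ}

/-- The coercion from plain vectors to Euclidean space. -/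
noncomputable def toE {p : ℕ} (x : Fin p → ℝ) : EuclideanSpace ℝ (Fin p) :=
  (WithLp.equiv 2 (Fin p → ℝ)).symm x

lemma inner_toE (x y : Fin p → ℝ) : ⟪toE x, toE y⟫ = x ⬝ᵥ y := by
  simp [toE, PiLp.inner_apply, dotProduct, mul_comm]

lemma normsq_toE (x : Fin p → ℝ) : ‖toE x‖ ^ 2 = x ⬝ᵥ x := by
  rw [← inner_toE, real_inner_self_eq_norm_sq]

set_option synthInstance.maxHeartbeats 1000000 in
set_option maxHeartbeats 1000000 in
lemma norm_mulVec_le (M : Matrix (Fin p) (Fin p) ℝ) (x : Fin p → ℝ) :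
    ‖toE (M *ᵥ x)‖ ≤ specNorm M * ‖toE x‖ := by
  have h := ContinuousLinearMap.le_opNorm
    (LinearMap.toContinuousLinearMap (Matrix.toEuclideanLin M)) (toE x)
  simpa [toE, specNorm, toEuclideanLin_apply_piLp_toLp] using h

set_option synthInstance.maxHeartbeats 1000000 in
set_option maxHeartbeats 1000000 in
lemma specNorm_le_of (M : Matrix (Fin p) (Fin p) ℝ) (c : ℝ) (hc : 0 ≤ c)
    (h : ∀ x : Fin p → ℝ, ‖toE (M *ᵥ x)‖ ≤ c * ‖toE x‖) : specNorm M ≤ c := by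
  apply ContinuousLinearMap.opNorm_le_bound _ hc
  intro x
  simpa [toE, toEuclideanLin_apply] using h ((WithLp.equiv 2 (Fin p → ℝ)) x)

lemma toE_coe (w : EuclideanSpace ℝ (Fin p)) : toE (⇑w) = w := rfl

lemma quad_bound {τ : ℝ} (hτ : τ ≤ 0) (F S : Matrix (Fin p) (Fin p) ℝ)
    (hS : S = (1 / 2 : ℝ) • (1 : Matrix (Fin p) (Fin p) ℝ) - (τ / 12 : ℝ) • (Fᵀ * F))
    (v : Fin p → ℝ) : (1/2 : ℝ) * (v ⬝ᵥ v) ≤ v ⬝ᵥ (S *ᵥ v) := by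
  subst hS
  have h1 : v ⬝ᵥ ((Fᵀ * F) *ᵥ v) = (F *ᵥ v) ⬝ᵥ (F *ᵥ v) := by
    rw [← mulVec_mulVec, dotProduct_mulVec, vecMul_transpose]
  have h2 : (0:ℝ) ≤ (F *ᵥ v) ⬝ᵥ (F *ᵥ v) :=
    Finset.sum_nonneg fun i _ => mul_self_nonneg _
  rw [sub_mulVec, smul_mulVec, smul_mulVec, one_mulVec, dotProduct_sub,
    dotProduct_smul, dotProduct_smul, h1]
  have : (0:ℝ) ≤ -(τ/12) * ((F *ᵥ v) ⬝ᵥ (F *ᵥ v)) := by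
    apply mul_nonneg _ h2; linarith
  simp only [smul_eq_mul]
  linarith

lemma trace_quad (S : Matrix (Fin p) (Fin p) ℝ)
    (hq : ∀ v : Fin p → ℝ, (1/2 : ℝ) * (v ⬝ᵥ v) ≤ v ⬝ᵥ (S *ᵥ v))
    (Y : Matrix (Fin p) (Fin p) ℝ) :
    (1/2 : ℝ) * ∑ i, ∑ j, (Y j i)^2 ≤ trace (Yᵀ * (S * Y)) := by
  have key : trace (Yᵀ * (S * Y)) = ∑ i, (fun j => Y j i) ⬝ᵥ (S *ᵥ fun j => Y j i) := by
    simp [trace, diag, mul_apply, dotProduct, mulVec, Finset.mul_sum, Finset.sum_mul, mul_assoc]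
  rw [key, Finset.mul_sum]
  apply Finset.sum_le_sum
  intro i _
  simpa [dotProduct, pow_two] using hq (fun j => Y j i)

lemma skew_of_sylvester (S E Ahat : Matrix (Fin p) (Fin p) ℝ)
    (hSsym : Sᵀ = S)
    (hq : ∀ v : Fin p → ℝ, (1/2 : ℝ) * (v ⬝ᵥ v) ≤ v ⬝ᵥ (S *ᵥ v))
    (hE : Eᵀ = -E) (hAhat : S * Ahat + Ahat * S = E) :
    Ahatᵀ = -Ahat := by
  set X := Ahatᵀ + Ahat with hX
  have hXsym : Xᵀ = X := by simp [hX, transpose_add, add_comm]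
  have hzero : S * X + X * S = 0 := by
    have ht := congrArg transpose hAhat
    rw [transpose_add, transpose_mul, transpose_mul, hSsym, hE] at ht
    have := congrArg₂ (· + ·) ht hAhat
    simp only [hX]
    linear_combination (norm := noncomm_ring) this
  have htr : trace (Xᵀ * (S * X)) + trace (Xᵀ * (X * S)) = 0 := by
    have := congrArg (fun M => trace (Xᵀ * M)) hzero
    simpa [mul_add, trace_add] using this
  have h2 : trace (Xᵀ * (X * S)) = trace ((Xᵀ)ᵀ * (S * Xᵀ)) := by
    rw [transpose_transpose, hXsym, ← mul_assoc, ← mul_assoc, trace_mul_cycle X S X]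
  have hb1 := trace_quad S hq X
  have hb2 := trace_quad S hq Xᵀ
  have hsum : ∑ i, ∑ j, (X j i)^2 ≤ 0 := by
    have hts : ∑ i, ∑ j, (Xᵀ j i)^2 = ∑ i, ∑ j, (X j i)^2 := by
      rw [Finset.sum_comm]; simp [transpose_apply]
    rw [h2] at htr
    nlinarith [hb1, hb2]
  have hall : ∑ i, ∑ j, (X j i)^2 = 0 :=
    le_antisymm hsum (Finset.sum_nonneg fun i _ => Finset.sum_nonneg fun j _ => sq_nonneg _)
  have hXz : X = 0 := by
    ext j i
    have h1 := (Finset.sum_eq_zero_iff_of_nonneg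
      (fun i _ => Finset.sum_nonneg fun j _ => sq_nonneg (X j i))).1 hall i (Finset.mem_univ i)
    have h2 := (Finset.sum_eq_zero_iff_of_nonneg (fun j _ => sq_nonneg (X j i))).1 h1 j
      (Finset.mem_univ j)
    simpa using pow_eq_zero_iff two_ne_zero |>.1 h2
  have hfin := hXz
  rw [hX] at hfin
  exact eq_neg_of_add_eq_zero_left hfin

lemma rayleigh_upper (M : Matrix (Fin p) (Fin p) ℝ) (hM : M.IsHermitian) (μ : ℝ)
    (hμ : ∀ i, hM.eigenvalues i ≤ μ) (x : Fin p → ℝ) :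
    x ⬝ᵥ (M *ᵥ x) ≤ μ * (x ⬝ᵥ x) := by
  set U : Matrix (Fin p) (Fin p) ℝ := (hM.eigenvectorUnitary : Matrix (Fin p) (Fin p) ℝ) with hU
  have hUU : U * star U = 1 := (Matrix.mem_unitaryGroup_iff).mp hM.eigenvectorUnitary.2
  have hμ1 : diagonal (fun _ : Fin p => μ) = μ • (1 : Matrix (Fin p) (Fin p) ℝ) := by
    ext i j
    rcases eq_or_ne i j with h|h <;> simp [diagonal_apply, h, Matrix.one_apply]
  have hdecomp : μ • (1 : Matrix (Fin p) (Fin p) ℝ) - M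
      = U * diagonal (fun i => μ - hM.eigenvalues i) * star U := by
    have hst := hM.spectral_theorem
    rw [Unitary.conjStarAlgAut_apply] at hst
    have hdiag : diagonal (fun i => μ - hM.eigenvalues i)
        = diagonal (fun _ => μ) - diagonal (RCLike.ofReal ∘ hM.eigenvalues) := by
      rw [← diagonal_sub]; rfl
    rw [hdiag, mul_sub, sub_mul, ← hst]
    congr 1
    rw [hμ1, mul_smul_comm, smul_mul_assoc, mul_one, hUU]
  have hPSD : PosSemidef (μ • (1 : Matrix (Fin p) (Fin p) ℝ) - M) := by
    rw [hdecomp, Matrix.star_eq_conjTranspose]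
    exact PosSemidef.mul_mul_conjTranspose_same
      (PosSemidef.diagonal (fun i => by simpa using sub_nonneg.2 (hμ i))) U
  have := hPSD.dotProduct_mulVec_nonneg x
  simp only [star_trivial, sub_mulVec, smul_mulVec, one_mulVec, dotProduct_sub,
    dotProduct_smul, smul_eq_mul] at this
  linarith

end aux

theorem initial_guess_norm_bound_large_beta (p : ℕ) (hp : 1 ≤ p) (β : ℝ)
    (hβ : (1 / 2 : ℝ) ≤ β) (τ : ℝ) (hτ : τ = 1 - 2 * β)
    (F : Matrix (Fin p) (Fin p) ℝ)
    (S : Matrix (Fin p) (Fin p) ℝ)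
    (hS : S = (1 / 2 : ℝ) • (1 : Matrix (Fin p) (Fin p) ℝ) - (τ / 12 : ℝ) • (Fᵀ * F))
    (E : Matrix (Fin p) (Fin p) ℝ) (hE : Eᵀ = -E)
    (Ahat : Matrix (Fin p) (Fin p) ℝ) (hAhat : S * Ahat + Ahat * S = E) :
    specNorm Ahat ≤ specNorm E := by
  have hτ0 : τ ≤ 0 := by rw [hτ]; linarith
  have hq : ∀ v : Fin p → ℝ, (1/2 : ℝ) * (v ⬝ᵥ v) ≤ v ⬝ᵥ (S *ᵥ v) :=
    quad_bound hτ0 F S hS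
  have hSsym : Sᵀ = S := by
    rw [hS]; simp [transpose_sub, transpose_smul, transpose_mul, transpose_one, mul_assoc]
  have hskew : Ahatᵀ = -Ahat := skew_of_sylvester S E Ahat hSsym hq hE hAhat
  set M : Matrix (Fin p) (Fin p) ℝ := Ahatᵀ * Ahat with hMdef
  have hconj : Ahatᴴ = Ahatᵀ := by ext i j; simp [conjTranspose_apply]
  have hMpsd : PosSemidef M := by
    rw [hMdef, ← hconj]; exact posSemidef_conjTranspose_mul_self Ahat
  have hM : M.IsHermitian := hMpsd.1
  haveI : Nonempty (Fin p) := ⟨⟨0, hp⟩⟩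
  obtain ⟨i₀, hi₀⟩ := Finite.exists_max hM.eigenvalues
  set μ : ℝ := hM.eigenvalues i₀ with hμdef
  have hμ0 : 0 ≤ μ := hMpsd.eigenvalues_nonneg i₀
  set v : Fin p → ℝ := ⇑(hM.eigenvectorBasis i₀) with hvdef
  have hv : M *ᵥ v = μ • v := hM.mulVec_eigenvectorBasis i₀
  have hvnorm : v ⬝ᵥ v = 1 := by
    have h1 : ‖hM.eigenvectorBasis i₀‖ = 1 := hM.eigenvectorBasis.orthonormal.1 i₀
    have := normsq_toE v
    rw [hvdef, toE_coe, h1] at this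
    simpa using this.symm
  set a : Fin p → ℝ := Ahat *ᵥ v with hadef
  have haa : a ⬝ᵥ a = μ := by
    have h1 : v ⬝ᵥ (M *ᵥ v) = a ⬝ᵥ a := by
      rw [hMdef, ← mulVec_mulVec, dotProduct_mulVec, vecMul_transpose, hadef]
    have h2 : v ⬝ᵥ (M *ᵥ v) = μ := by
      rw [hv, dotProduct_smul, hvnorm, smul_eq_mul, mul_one]
    rw [← h1, h2]
  have hEv : E *ᵥ v = S *ᵥ a + Ahat *ᵥ (S *ᵥ v) := by
    rw [hadef, mulVec_mulVec, mulVec_mulVec, ← add_mulVec, hAhat]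
  have hAta : Ahatᵀ *ᵥ a = μ • v := by
    rw [hadef, mulVec_mulVec, ← hMdef, hv]
  have key : μ ≤ a ⬝ᵥ (E *ᵥ v) := by
    rw [hEv, dotProduct_add]
    have t1 : (1/2 : ℝ) * (a ⬝ᵥ a) ≤ a ⬝ᵥ (S *ᵥ a) := hq a
    have t2 : a ⬝ᵥ (Ahat *ᵥ (S *ᵥ v)) = μ * (v ⬝ᵥ (S *ᵥ v)) := by
      rw [dotProduct_mulVec, ← transpose_transpose Ahat, vecMul_transpose,
        hAta, smul_dotProduct, smul_eq_mul]
    have t3 : μ * ((1/2 : ℝ) * (v ⬝ᵥ v)) ≤ μ * (v ⬝ᵥ (S *ᵥ v)) :=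
      mul_le_mul_of_nonneg_left (hq v) hμ0
    rw [hvnorm] at t3
    rw [haa] at t1
    rw [t2]
    linarith
  have hup : a ⬝ᵥ (E *ᵥ v) ≤ Real.sqrt μ * specNorm E := by
    have hC : a ⬝ᵥ (E *ᵥ v) ≤ ‖toE a‖ * ‖toE (E *ᵥ v)‖ := by
      rw [← inner_toE]; exact real_inner_le_norm _ _
    have hEvb : ‖toE (E *ᵥ v)‖ ≤ specNorm E * ‖toE v‖ := norm_mulVec_le E v
    have hvn : ‖toE v‖ = 1 := by
      rw [hvdef, toE_coe]; exact hM.eigenvectorBasis.orthonormal.1 i₀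
    have han : ‖toE a‖ = Real.sqrt μ := by
      rw [← Real.sqrt_sq (norm_nonneg (toE a)), normsq_toE, haa]
    calc a ⬝ᵥ (E *ᵥ v) ≤ ‖toE a‖ * ‖toE (E *ᵥ v)‖ := hC
      _ ≤ ‖toE a‖ * (specNorm E * ‖toE v‖) := by
          apply mul_le_mul_of_nonneg_left hEvb (norm_nonneg _)
      _ = Real.sqrt μ * specNorm E := by rw [han, hvn, mul_one]
  have hAle : specNorm Ahat ≤ Real.sqrt μ := by
    apply specNorm_le_of _ _ (Real.sqrt_nonneg μ)
    intro x
    have hb : (Ahat *ᵥ x) ⬝ᵥ (Ahat *ᵥ x) ≤ μ * (x ⬝ᵥ x) := by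
      have h1 : x ⬝ᵥ (M *ᵥ x) = (Ahat *ᵥ x) ⬝ᵥ (Ahat *ᵥ x) := by
        rw [hMdef, ← mulVec_mulVec, dotProduct_mulVec, vecMul_transpose]
      rw [← h1]
      exact rayleigh_upper M hM μ (fun i => hi₀ i) x
    have h2 : ‖toE (Ahat *ᵥ x)‖ ^ 2 ≤ (Real.sqrt μ * ‖toE x‖) ^ 2 := by
      rw [normsq_toE, mul_pow, Real.sq_sqrt hμ0, normsq_toE x]
      exact hb
    have := Real.sqrt_le_sqrt h2
    rwa [Real.sqrt_sq (norm_nonneg _), Real.sqrt_sq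
      (mul_nonneg (Real.sqrt_nonneg μ) (norm_nonneg _))] at this
  rcases eq_or_lt_of_le hμ0 with h0 | hpos
  · have : Real.sqrt μ = 0 := by rw [← h0, Real.sqrt_zero]
    rw [this] at hAle
    calc specNorm Ahat ≤ 0 := hAle
      _ ≤ specNorm E := norm_nonneg _
  · have hs : 0 < Real.sqrt μ := Real.sqrt_pos.2 hpos
    have hmu : Real.sqrt μ * Real.sqrt μ = μ := Real.mul_self_sqrt hμ0
    have hfinal : Real.sqrt μ ≤ specNorm E := by nlinarith [le_trans key hup]
    exact le_trans hAle hfinal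
end

section
/- Let p ≥ 1, let 0 < β < 1/2 and set τ := 1 − 2β (so 0 < τ < 1). Let δ ≥ 0 satisfy τ·δ² < 6, let F ∈ ℝ^{p×p} satisfy ‖F‖₂ ≤ δ, set S := (1/2)·I_p − (τ/12)·Fᵀ·F, and let E be a real p×p skew-symmetric matrix. If Â ∈ ℝ^{p×p} solves the Sylvester equation S·Â + Â·S = E, then ‖Â‖₂ ≤ (6/(6−τδ²))·‖E‖₂. -/
open Matrix

section key

variable {p : ℕ}

local notation "E'" => EuclideanSpace ℝ (Fin p)

/-- Key abstract lemma: if `⟪x, Sc x⟫ ≥ μ` on the unit sphere and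
`Sc ∘ A + A ∘ Sc = Ec`, then `2μ‖A‖ ≤ ‖Ec‖`. -/
lemma key_sylvester (hp : 1 ≤ p) (A Sc Ec : E' →L[ℝ] E') (μ : ℝ) (hμ : 0 ≤ μ)
    (hSc : ∀ x : E', ‖x‖ = 1 → μ ≤ inner ℝ x (Sc x))
    (heq : ∀ x : E', Sc (A x) + A (Sc x) = Ec x) :
    2 * μ * ‖A‖ ≤ ‖Ec‖ := by
  classical
  -- sphere is nonempty and compact
  have hi : Nonempty (Fin p) := ⟨⟨0, hp⟩⟩
  have hnt : Nontrivial E' := by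
    refine ⟨0, EuclideanSpace.single ⟨0, hp⟩ (1 : ℝ), ?_⟩
    intro h
    have := congrArg (fun v : E' => v ⟨0, hp⟩) h.symm
    simp [EuclideanSpace.single] at this
  have hsph : (Metric.sphere (0 : E') 1).Nonempty :=
    NormedSpace.sphere_nonempty.mpr zero_le_one
  have hcomp : IsCompact (Metric.sphere (0 : E') 1) := isCompact_sphere 0 1
  -- maximize ‖A x‖ on the sphere
  obtain ⟨x₀, hx₀s, hx₀max⟩ := hcomp.exists_isMaxOn hsph
    (Continuous.continuousOn (by continuity : Continuous fun x : E' => ‖A x‖))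
  have hx₀ : ‖x₀‖ = 1 := by simpa using hx₀s
  have hx₀ne : x₀ ≠ 0 := by intro h; rw [h] at hx₀; simp at hx₀
  -- ‖A‖ = ‖A x₀‖
  have hAle : ∀ x : E', ‖A x‖ ≤ ‖A x₀‖ * ‖x‖ := by
    intro x
    rcases eq_or_ne x 0 with rfl | hx
    · simp
    · have hxn : ‖x‖ ≠ 0 := norm_ne_zero_iff.mpr hx
      have hmem : (‖x‖⁻¹ • x) ∈ Metric.sphere (0 : E') 1 := by
        simp [norm_smul, abs_of_nonneg (inv_nonneg.mpr (norm_nonneg x)), inv_mul_cancel₀ hxn]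
      have h5 : ‖A (‖x‖⁻¹ • x)‖ ≤ ‖A x₀‖ := hx₀max hmem
      rw [_root_.map_smul, norm_smul, norm_inv, norm_norm] at h5
      calc ‖A x‖ = ‖x‖ * (‖x‖⁻¹ * ‖A x‖) := by field_simp
        _ ≤ ‖x‖ * ‖A x₀‖ := by
            apply mul_le_mul_of_nonneg_left _ (norm_nonneg x)
            simpa using h5
        _ = ‖A x₀‖ * ‖x‖ := mul_comm _ _
  have hnorm : ‖A‖ = ‖A x₀‖ := by
    apply le_antisymm
    · exact A.opNorm_le_bound (norm_nonneg _) hAle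
    · simpa [hx₀] using A.le_opNorm x₀
  set σ := ‖A x₀‖ with hσdef
  rcases eq_or_lt_of_le (norm_nonneg (A x₀)) with hσ0 | hσpos
  · -- σ = 0
    rw [hnorm, hσdef, ← hσ0]
    simpa using norm_nonneg Ec
  · -- σ > 0 : Rayleigh argument on B = A† ∘ A
    set B : E' →L[ℝ] E' := ContinuousLinearMap.adjoint A ∘L A with hBdef
    have hBsa : IsSelfAdjoint B := by
      have : B = star A * A := by
        rw [ContinuousLinearMap.star_eq_adjoint]; rfl
      rw [this]
      exact IsSelfAdjoint.star_mul_self A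
    have hBapp : ∀ x : E', B.reApplyInnerSelf x = ‖A x‖ ^ 2 := by
      intro x
      rw [ContinuousLinearMap.reApplyInnerSelf_apply]
      have h1 : (inner ℝ (B x) x : ℝ) = ‖A x‖ ^ 2 := by
        rw [hBdef]
        simp only [ContinuousLinearMap.comp_apply, ContinuousLinearMap.adjoint_inner_left]
        exact real_inner_self_eq_norm_sq _
      rw [h1]
      simp
    have hextr : IsMaxOn B.reApplyInnerSelf (Metric.sphere (0 : E') ‖x₀‖) x₀ := by
      intro x hx
      have hx1 : x ∈ Metric.sphere (0 : E') 1 := by rwa [hx₀] at hx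
      have h1 := hx₀max hx1
      simp only [Set.mem_setOf_eq, hBapp]
      have h2 : ‖A x‖ ≤ ‖A x₀‖ := h1
      exact pow_le_pow_left₀ (norm_nonneg _) h2 2
    have heig := hBsa.hasEigenvector_of_isLocalExtrOn hx₀ne (Or.inr hextr.localize)
    have hray : B.rayleighQuotient x₀ = σ ^ 2 := by
      rw [ContinuousLinearMap.rayleighQuotient, hBapp, hx₀]
      norm_num [hσdef]
    have hBx₀ : ContinuousLinearMap.adjoint A (A x₀) = σ ^ 2 • x₀ := by
      have := heig.apply_eq_smul
      rw [hray] at this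
      simpa [hBdef] using this
    -- u := σ⁻¹ • A x₀
    set u : E' := σ⁻¹ • A x₀ with hudef
    have hσne : σ ≠ 0 := ne_of_gt hσpos
    have hu1 : ‖u‖ = 1 := by
      rw [hudef, norm_smul, norm_inv, Real.norm_eq_abs, abs_of_pos hσpos,
        inv_mul_cancel₀ hσne]
    have hAx₀ : A x₀ = σ • u := by
      rw [hudef, smul_smul, mul_inv_cancel₀ hσne, one_smul]
    have hadju : ContinuousLinearMap.adjoint A u = σ • x₀ := by
      rw [hudef, _root_.map_smul, hBx₀, smul_smul]
      congr 1
      field_simp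
    -- inner product estimate
    have hinner : (2 : ℝ) * μ * σ ≤ inner ℝ u (Ec x₀) := by
      have h1 : (inner ℝ u (Sc (A x₀)) : ℝ) = σ * inner ℝ u (Sc u) := by
        rw [hAx₀, _root_.map_smul, inner_smul_right]
      have h2 : (inner ℝ u (A (Sc x₀)) : ℝ) = σ * inner ℝ x₀ (Sc x₀) := by
        rw [← ContinuousLinearMap.adjoint_inner_left, hadju, inner_smul_left]
        simp
      have h3 : (inner ℝ u (Ec x₀) : ℝ) = σ * inner ℝ u (Sc u) + σ * inner ℝ x₀ (Sc x₀) := by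
        rw [← heq x₀, inner_add_right, h1, h2]
      rw [h3]
      have b1 : μ ≤ inner ℝ u (Sc u) := hSc u hu1
      have b2 : μ ≤ inner ℝ x₀ (Sc x₀) := hSc x₀ hx₀
      nlinarith
    have hub : (inner ℝ u (Ec x₀) : ℝ) ≤ ‖Ec‖ := by
      calc (inner ℝ u (Ec x₀) : ℝ) ≤ ‖u‖ * ‖Ec x₀‖ := real_inner_le_norm _ _
        _ ≤ ‖u‖ * (‖Ec‖ * ‖x₀‖) := by
            apply mul_le_mul_of_nonneg_left (Ec.le_opNorm x₀) (norm_nonneg u)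
        _ = ‖Ec‖ := by rw [hu1, hx₀]; ring
    rw [hnorm]
    exact le_trans hinner hub |>.trans_eq' (by ring)

end key

theorem initial_guess_norm_bound_small_beta (p : ℕ) (hp : 1 ≤ p) (β : ℝ)
    (hβ0 : 0 < β) (hβ : β < (1 / 2 : ℝ)) (τ : ℝ) (hτ : τ = 1 - 2 * β)
    (δ : ℝ) (hδ0 : 0 ≤ δ) (hδ : τ * δ ^ 2 < 6)
    (F : Matrix (Fin p) (Fin p) ℝ) (hF : specNorm F ≤ δ)
    (S : Matrix (Fin p) (Fin p) ℝ)
    (hS : S = (1 / 2 : ℝ) • (1 : Matrix (Fin p) (Fin p) ℝ) - (τ / 12 : ℝ) • (Fᵀ * F))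
    (E : Matrix (Fin p) (Fin p) ℝ) (hE : Eᵀ = -E)
    (Ahat : Matrix (Fin p) (Fin p) ℝ) (hAhat : S * Ahat + Ahat * S = E) :
    specNorm Ahat ≤ (6 / (6 - τ * δ ^ 2)) * specNorm E := by
  classical
  have hτpos : 0 < τ := by rw [hτ]; linarith
  -- convert matrices to CLMs
  set toC : Matrix (Fin p) (Fin p) ℝ → (EuclideanSpace ℝ (Fin p) →L[ℝ] EuclideanSpace ℝ (Fin p)) :=
    fun M => LinearMap.toContinuousLinearMap (Matrix.toEuclideanLin M) with htoC
  have hmul : ∀ M N x, toC (M * N) x = toC M (toC N x) := by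
    intro M N x
    simp only [htoC, LinearMap.coe_toContinuousLinearMap']
    rw [Matrix.toEuclideanLin_eq_toLin, Matrix.toLin_mul _ (PiLp.basisFun 2 ℝ (Fin p)) _]
    rfl
  have hadd : ∀ M N x, toC (M + N) x = toC M x + toC N x := by
    intro M N x
    simp only [htoC, map_add, ContinuousLinearMap.add_apply]
  have heqn : ∀ x, toC S (toC Ahat x) + toC Ahat (toC S x) = toC E x := by
    intro x
    rw [← hmul, ← hmul, ← hadd, hAhat]
  -- quadratic form bound on S
  set μ : ℝ := (6 - τ * δ ^ 2) / 12 with hμdef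
  have hμpos : 0 < μ := by rw [hμdef]; linarith
  have hSbound : ∀ x : EuclideanSpace ℝ (Fin p), ‖x‖ = 1 → μ ≤ inner ℝ x (toC S x) := by
    intro x hx
    have hFx : ‖toC F x‖ ≤ δ := by
      have := (toC F).le_opNorm x
      rw [hx, mul_one] at this
      exact this.trans hF
    have hFtF : (inner ℝ x (toC (Fᵀ * F) x) : ℝ) = ‖toC F x‖ ^ 2 := by
      rw [hmul]
      have hadj : toC Fᵀ (toC F x) = ContinuousLinearMap.adjoint (toC F) (toC F x) := by
        simp only [htoC, LinearMap.coe_toContinuousLinearMap']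
        have h1 : Fᵀ = Fᴴ := by
          simp [Matrix.conjTranspose, Matrix.transpose, star]
        rw [h1, Matrix.toEuclideanLin_conjTranspose_eq_adjoint,
          ← LinearMap.adjoint_toContinuousLinearMap]
        rfl
      rw [hadj, ContinuousLinearMap.adjoint_inner_right, real_inner_self_eq_norm_sq]
    have hid : toC (1 : Matrix (Fin p) (Fin p) ℝ) x = x := by
      simp only [htoC, LinearMap.coe_toContinuousLinearMap']
      rw [Matrix.toEuclideanLin_eq_toLin, Matrix.toLin_one]
      rfl
    have hSx : toC S x = (1/2 : ℝ) • x - (τ/12 : ℝ) • toC (Fᵀ * F) x := by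
      simp only [htoC, LinearMap.coe_toContinuousLinearMap', hS, map_sub, _root_.map_smul,
        LinearMap.sub_apply, LinearMap.smul_apply]
      congr 1
      · -- (1/2) • toEuclideanLin 1 x = (1/2) • x
        congr 1
        rw [Matrix.toEuclideanLin_eq_toLin, Matrix.toLin_one]
        rfl
    have : (inner ℝ x (toC S x) : ℝ) = 1/2 * ‖x‖^2 - τ/12 * ‖toC F x‖^2 := by
      rw [hSx, inner_sub_right, inner_smul_right, inner_smul_right,
        real_inner_self_eq_norm_sq, hFtF]
    rw [this, hx]
    have hFx2 : ‖toC F x‖ ^ 2 ≤ δ ^ 2 := pow_le_pow_left₀ (norm_nonneg _) hFx 2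
    have : τ/12 * ‖toC F x‖^2 ≤ τ/12 * δ^2 :=
      mul_le_mul_of_nonneg_left hFx2 (by linarith)
    rw [hμdef]
    nlinarith
  have hkey := key_sylvester hp (toC Ahat) (toC S) (toC E) μ (le_of_lt hμpos) hSbound heqn
  have hsA : specNorm Ahat = ‖toC Ahat‖ := rfl
  have hsE : specNorm E = ‖toC E‖ := rfl
  rw [hsA, hsE]
  have h2μ : 2 * μ = (6 - τ * δ^2) / 6 := by rw [hμdef]; ring
  have hpos : 0 < 6 - τ * δ^2 := by linarith
  rw [div_mul_eq_mul_div, le_div_iff₀ hpos]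
  nlinarith [norm_nonneg (toC Ahat), norm_nonneg (toC E)]
end

section
/- Let n, p, q ≥ 1 with N := 2p + q ≤ n, let β > 0, and let W = [U Q₁ Q₂] ∈ ℝ^{n×N} have orthonormal columns (WᵀW = I_N), where U, Q₁ ∈ ℝ^{n×p} and Q₂ ∈ ℝ^{n×q}. Let A be a real p×p skew-symmetric matrix, B₁ ∈ ℝ^{p×p}, B₂ ∈ ℝ^{q×p}. For B₂' ∈ ℝ^{q×p}, let M(B₂') denote the N×N skew-symmetric matrix with 3×3 block structure [[2βA, −B₁ᵀ, −B₂'ᵀ],[B₁, 0, 0],[B₂', 0, 0]], and set X(B₂') := exp(M(B₂')) · I_{N×p} · exp((1−2β)A). Assume the last q rows of X(B₂) vanish. Then for every real q×q orthogonal matrix R: (i) X(R·B₂) = X(B₂), so that W·X(R·B₂) = W·X(B₂); and (ii) the tangent vector Δ_R := U·A + Q₁·B₁ + Q₂·(R·B₂) satisfies β·Tr(AᵀA) + Tr(B₁ᵀB₁) + Tr((RB₂)ᵀ(RB₂)) = β·Tr(AᵀA) + Tr(B₁ᵀB₁) + Tr(B₂ᵀB₂), i.e., Δ_R has the same β-norm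 as Δ_{I_q}. -/
open Matrix

theorem orthogonal_family_of_equal_norm_logs
    (n p q : ℕ) (hp : 1 ≤ p) (hq : 1 ≤ q) (hn : 2 * p + q ≤ n)
    (β : ℝ) (hβ : 0 < β)
    (U Q₁ : Matrix (Fin n) (Fin p) ℝ) (Q₂ : Matrix (Fin n) (Fin q) ℝ)
    (W : Matrix (Fin n) (Fin p ⊕ (Fin p ⊕ Fin q)) ℝ)
    (hW : W = Matrix.fromCols U (Matrix.fromCols Q₁ Q₂))
    (hWorth : Wᵀ * W = 1)
    (A : Matrix (Fin p) (Fin p) ℝ) (hA : Aᵀ = -A)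
    (B₁ : Matrix (Fin p) (Fin p) ℝ) (B₂ : Matrix (Fin q) (Fin p) ℝ)
    (M : Matrix (Fin q) (Fin p) ℝ →
      Matrix (Fin p ⊕ (Fin p ⊕ Fin q)) (Fin p ⊕ (Fin p ⊕ Fin q)) ℝ)
    (hM : ∀ B₂', M B₂' =
      Matrix.fromBlocks ((2 * β) • A)
        (Matrix.fromCols (-B₁ᵀ) (-B₂'ᵀ))
        (Matrix.fromRows B₁ B₂')
        (0 : Matrix (Fin p ⊕ Fin q) (Fin p ⊕ Fin q) ℝ))
    (X : Matrix (Fin q) (Fin p) ℝ → Matrix (Fin p ⊕ (Fin p ⊕ Fin q)) (Fin p) ℝ)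
    (hX : ∀ B₂', X B₂' = NormedSpace.exp (M B₂') *
      Matrix.fromRows (1 : Matrix (Fin p) (Fin p) ℝ)
        (0 : Matrix (Fin p ⊕ Fin q) (Fin p) ℝ) *
      NormedSpace.exp ((1 - 2 * β) • A))
    (hvanish : ∀ (j : Fin q) (i : Fin p), X B₂ (Sum.inr (Sum.inr j)) i = 0) :
    ∀ R : Matrix (Fin q) (Fin q) ℝ, Rᵀ * R = 1 →
      (X (R * B₂) = X B₂ ∧ W * X (R * B₂) = W * X B₂) ∧
      β * Matrix.trace (Aᵀ * A) + Matrix.trace (B₁ᵀ * B₁) +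
          Matrix.trace ((R * B₂)ᵀ * (R * B₂)) =
        β * Matrix.trace (Aᵀ * A) + Matrix.trace (B₁ᵀ * B₁) +
          Matrix.trace (B₂ᵀ * B₂) := by
  intro R hR
  have hRR : R * Rᵀ = 1 := mul_eq_one_comm.mp hR
  set T : Matrix (Fin p ⊕ Fin q) (Fin p ⊕ Fin q) ℝ :=
    Matrix.fromBlocks 1 0 0 R with hT
  set S : Matrix (Fin p ⊕ (Fin p ⊕ Fin q)) (Fin p ⊕ (Fin p ⊕ Fin q)) ℝ :=
    Matrix.fromBlocks 1 0 0 T with hS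
  have hST : Sᵀ = Matrix.fromBlocks 1 0 0 (Matrix.fromBlocks 1 0 0 Rᵀ) := by
    simp [hS, hT, Matrix.fromBlocks_transpose]
  have hSST : S * Sᵀ = 1 := by
    rw [hST, hS, hT, Matrix.fromBlocks_multiply, Matrix.fromBlocks_multiply]
    simp [hRR, Matrix.fromBlocks_one]
  have hSunit : IsUnit S := ⟨⟨S, Sᵀ, hSST, mul_eq_one_comm.mp hSST⟩, rfl⟩
  have hSinv : S⁻¹ = Sᵀ := Matrix.inv_eq_right_inv hSST
  have hconj : M (R * B₂) = S * M B₂ * Sᵀ := by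
    rw [hM, hM, hST, hS, hT, Matrix.fromBlocks_multiply, Matrix.fromBlocks_multiply]
    simp [Matrix.fromCols_mul_fromBlocks, Matrix.fromBlocks_mul_fromRows,
      Matrix.transpose_mul]
  have hexp : NormedSpace.exp (M (R * B₂)) = S * NormedSpace.exp (M B₂) * Sᵀ := by
    rw [hconj, ← hSinv]
    exact Matrix.exp_conj S (M B₂) hSunit
  have hSX : Sᵀ * Matrix.fromRows (1 : Matrix (Fin p) (Fin p) ℝ)
      (0 : Matrix (Fin p ⊕ Fin q) (Fin p) ℝ) = Matrix.fromRows 1 0 := by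
    rw [hST, Matrix.fromBlocks_mul_fromRows]
    simp
  have hXeq : X (R * B₂) = S * X B₂ := by
    rw [hX, hX, hexp]
    simp only [Matrix.mul_assoc]
    rw [← Matrix.mul_assoc Sᵀ, hSX]
  have hfix : S * X B₂ = X B₂ := by
    ext i j
    rcases i with i | i | i
    · simp [hS, hT, Matrix.mul_apply, Matrix.fromBlocks, Fintype.sum_sum_type,
        Matrix.one_apply]
    · simp [hS, hT, Matrix.mul_apply, Matrix.fromBlocks, Fintype.sum_sum_type,
        Matrix.one_apply]
    · simp [hS, hT, Matrix.mul_apply, Matrix.fromBlocks, Fintype.sum_sum_type,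
        Matrix.one_apply, hvanish]
  have hXX : X (R * B₂) = X B₂ := hXeq.trans hfix
  refine ⟨⟨hXX, by rw [hXX]⟩, ?_⟩
  have htr : (R * B₂)ᵀ * (R * B₂) = B₂ᵀ * B₂ := by
    rw [Matrix.transpose_mul, Matrix.mul_assoc, ← Matrix.mul_assoc Rᵀ, hR, Matrix.one_mul]
  rw [htr]
end

section
/- Let p ≥ 1, h ∈ ℝ, and let (A_k)_{k≥0} and (Â_k)_{k≥0} be sequences in ℝ^{p×p} and (Q_k)_{k≥0} a sequence of real p×p orthogonal matrices such that Â_k = A_{k−1} + h·Q_{k−1}·(A_{k−1} − Â_{k−1})·Q_{k−1}ᵀ for all k ≥ 1. Let c̄ ≥ 0 satisfy ‖A_{j−1} − A_j‖₂ ≤ c̄·‖A_j − A_{j+1}‖₂ for all j ≥ 1 and ‖Â₀ − A₀‖₂ ≤ c̄·‖A₀ − A₁‖₂, and assume c̄·|h| < 1. Then for every k ≥ 1: ‖Â_k − A_k‖₂ ≤ (1/(1 − c̄·|h|))·‖A_k − A_{k−1}‖₂. (Consistency of the accelerated forward iteration.) -/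
open Matrix

section aux
open scoped Matrix.Norms.L2Operator
variable {p : ℕ}

lemma specNorm_eq (M : Matrix (Fin p) (Fin p) ℝ) : specNorm M = ‖M‖ := rfl

lemma norm_orth (hp : 1 ≤ p) (Q M : Matrix (Fin p) (Fin p) ℝ) (hQ : Qᵀ * Q = 1) :
    ‖Q * M * Qᵀ‖ ≤ ‖M‖ := by
  haveI : Nonempty (Fin p) := ⟨⟨0, hp⟩⟩
  have hQH : Qᴴ = Qᵀ := by ext i j; simp [conjTranspose]
  have hQn : ‖Q‖ = 1 := by
    have := l2_opNorm_conjTranspose_mul_self Q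
    rw [hQH, hQ, norm_one] at this
    nlinarith [norm_nonneg Q]
  have hQt : ‖Qᵀ‖ = 1 := by rw [← hQH, l2_opNorm_conjTranspose, hQn]
  calc ‖Q * M * Qᵀ‖ ≤ ‖Q * M‖ * ‖Qᵀ‖ := l2_opNorm_mul _ _
    _ ≤ ‖Q‖ * ‖M‖ * ‖Qᵀ‖ := by
        have := l2_opNorm_mul Q M
        nlinarith [norm_nonneg Qᵀ, norm_nonneg M, norm_nonneg (Q * M)]
    _ = ‖M‖ := by rw [hQn, hQt]; ring

lemma key_step (hp : 1 ≤ p) (h : ℝ) (A Ahat Q : ℕ → Matrix (Fin p) (Fin p) ℝ)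
    (hQ : ∀ k, (Q k)ᵀ * Q k = 1)
    (hrec : ∀ k, Ahat (k + 1) = A k + h • (Q k * (A k - Ahat k) * (Q k)ᵀ)) (k : ℕ) :
    ‖Ahat (k + 1) - A (k + 1)‖ ≤ ‖A k - A (k + 1)‖ + |h| * ‖Ahat k - A k‖ := by
  have hdecomp : Ahat (k + 1) - A (k + 1)
      = (A k - A (k + 1)) + h • (Q k * (A k - Ahat k) * (Q k)ᵀ) := by
    rw [hrec k]; abel
  rw [hdecomp]
  calc ‖(A k - A (k + 1)) + h • (Q k * (A k - Ahat k) * (Q k)ᵀ)‖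
      ≤ ‖A k - A (k + 1)‖ + ‖h • (Q k * (A k - Ahat k) * (Q k)ᵀ)‖ := norm_add_le _ _
    _ = ‖A k - A (k + 1)‖ + |h| * ‖Q k * (A k - Ahat k) * (Q k)ᵀ‖ := by
        rw [norm_smul, Real.norm_eq_abs]
    _ ≤ ‖A k - A (k + 1)‖ + |h| * ‖A k - Ahat k‖ := by
        have := norm_orth hp (Q k) (A k - Ahat k) (hQ k)
        nlinarith [abs_nonneg h]
    _ = ‖A k - A (k + 1)‖ + |h| * ‖Ahat k - A k‖ := by rw [norm_sub_rev (A k) (Ahat k)]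

end aux

theorem accelerated_forward_consistency (p : ℕ) (hp : 1 ≤ p) (h : ℝ)
    (A Ahat Q : ℕ → Matrix (Fin p) (Fin p) ℝ)
    (hQ : ∀ k, (Q k)ᵀ * Q k = 1)
    (hrec : ∀ k, Ahat (k + 1) = A k + h • (Q k * (A k - Ahat k) * (Q k)ᵀ))
    (c : ℝ) (hc : 0 ≤ c)
    (hrev : ∀ j, 1 ≤ j → specNorm (A (j - 1) - A j) ≤ c * specNorm (A j - A (j + 1)))
    (h0 : specNorm (Ahat 0 - A 0) ≤ c * specNorm (A 0 - A 1))
    (hch : c * |h| < 1) :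
    ∀ k, 1 ≤ k →
      specNorm (Ahat k - A k) ≤ (1 / (1 - c * |h|)) * specNorm (A k - A (k - 1)) := by
  letI := Matrix.instL2OpNormedAddCommGroup (𝕜 := ℝ) (m := Fin p) (n := Fin p)
  simp only [specNorm_eq] at *
  have hpos : 0 < 1 - c * |h| := by linarith
  intro k hk
  induction k, hk using Nat.le_induction with
  | base =>
    have hstep := key_step hp h A Ahat Q hQ hrec 0
    have h0' : ‖Ahat 0 - A 0‖ ≤ c * ‖A 0 - A 1‖ := h0
    simp only [Nat.sub_self]
    have hr : ‖A 1 - A 0‖ = ‖A 0 - A 1‖ := norm_sub_rev _ _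
    rw [hr]
    have hn : (0:ℝ) ≤ ‖A 0 - A 1‖ := norm_nonneg _
    have hcc : 1 + |h| * c ≤ 1 / (1 - c * |h|) := by
      rw [le_div_iff₀ hpos]
      nlinarith [abs_nonneg h, mul_nonneg hc (abs_nonneg h), sq_nonneg (c*|h|)]
    calc ‖Ahat 1 - A 1‖ ≤ ‖A 0 - A 1‖ + |h| * ‖Ahat 0 - A 0‖ := hstep
      _ ≤ ‖A 0 - A 1‖ + |h| * (c * ‖A 0 - A 1‖) := by
          nlinarith [abs_nonneg h]
      _ = (1 + |h| * c) * ‖A 0 - A 1‖ := by ring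
      _ ≤ (1 / (1 - c * |h|)) * ‖A 0 - A 1‖ := by nlinarith
  | succ k hk1 ih =>
    have ih' := ih
    have hstep := key_step hp h A Ahat Q hQ hrec k
    have hrevk := hrev k hk1
    rw [norm_sub_rev (A (k - 1)) (A k)] at hrevk
    have hn1 : (0:ℝ) ≤ ‖A k - A (k + 1)‖ := norm_nonneg _
    have hn2 : (0:ℝ) ≤ ‖A k - A (k - 1)‖ := norm_nonneg _
    simp only [Nat.add_sub_cancel]
    have hr : ‖A (k + 1) - A k‖ = ‖A k - A (k + 1)‖ := norm_sub_rev _ _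
    rw [hr]
    have hC : (0:ℝ) < 1 / (1 - c * |h|) := by positivity
    calc ‖Ahat (k + 1) - A (k + 1)‖
        ≤ ‖A k - A (k + 1)‖ + |h| * ‖Ahat k - A k‖ := hstep
      _ ≤ ‖A k - A (k + 1)‖ + |h| * ((1 / (1 - c * |h|)) * ‖A k - A (k - 1)‖) := by
          nlinarith [abs_nonneg h]
      _ ≤ ‖A k - A (k + 1)‖ + |h| * ((1 / (1 - c * |h|)) * (c * ‖A k - A (k + 1)‖)) := by
          have : |h| * (1 / (1 - c * |h|)) ≥ 0 := by positivity
          nlinarith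
      _ ≤ (1 / (1 - c * |h|)) * ‖A k - A (k + 1)‖ := by
          have heq : ‖A k - A (k + 1)‖ + |h| * ((1 / (1 - c * |h|)) * (c * ‖A k - A (k + 1)‖))
              = (1 / (1 - c * |h|)) * ‖A k - A (k + 1)‖ := by
            have hne : 1 - c * |h| ≠ 0 := hpos.ne'
            have hd : 1 / (1 - c * |h|) * (1 - c * |h|) = 1 := one_div_mul_cancel hne
            linear_combination (-‖A k - A (k + 1)‖) * hd
          exact le_of_eq heq
end

section
/- Let n ≥ 2p ≥ 2, β ∈ ℝ, let U, Q ∈ ℝ^{n×p} satisfy UᵀU = I_p, QᵀQ = I_p and QᵀU = 0, let A be a real p×p skew-symmetric matrix and B ∈ ℝ^{p×p}. Then the matrix X := [U Q] · exp([[2βA, −Bᵀ],[B, 0_p]]) · I_{2p×p} · exp((1−2β)·A) satisfies XᵀX = I_p, i.e., X lies on the Stiefel manifold St(n,p). -/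
open Matrix

lemma exp_skew_orth {m : Type*} [Fintype m] [DecidableEq m]
    (M : Matrix m m ℝ) (h : Mᵀ = -M) :
    (NormedSpace.exp M)ᵀ * NormedSpace.exp M = 1 := by
  rw [← Matrix.exp_transpose, h, ← Matrix.exp_add_of_commute (-M) M (Commute.neg_left (Commute.refl M)),
    neg_add_cancel, NormedSpace.exp_zero]

theorem geodesic_endpoint_on_stiefel (n p : ℕ) (hp : 1 ≤ p) (hn : 2 * p ≤ n) (β : ℝ)
    (U Q : Matrix (Fin n) (Fin p) ℝ)
    (hU : Uᵀ * U = 1) (hQ : Qᵀ * Q = 1) (hQU : Qᵀ * U = 0)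
    (A : Matrix (Fin p) (Fin p) ℝ) (hA : Aᵀ = -A)
    (B : Matrix (Fin p) (Fin p) ℝ)
    (X : Matrix (Fin n) (Fin p) ℝ)
    (hX : X = Matrix.fromCols U Q *
      NormedSpace.exp
        (Matrix.fromBlocks ((2 * β) • A) (-Bᵀ) B (0 : Matrix (Fin p) (Fin p) ℝ)) *
      Matrix.fromRows (1 : Matrix (Fin p) (Fin p) ℝ) (0 : Matrix (Fin p) (Fin p) ℝ) *
      NormedSpace.exp ((1 - 2 * β) • A)) :
    Xᵀ * X = 1 := by
  set C := Matrix.fromCols U Q with hCdef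
  set M := Matrix.fromBlocks ((2 * β) • A) (-Bᵀ) B (0 : Matrix (Fin p) (Fin p) ℝ) with hMdef
  set F := Matrix.fromRows (1 : Matrix (Fin p) (Fin p) ℝ) (0 : Matrix (Fin p) (Fin p) ℝ)
    with hFdef
  have hUQ : Uᵀ * Q = 0 := by
    have := congrArg Matrix.transpose hQU
    simpa [Matrix.transpose_mul] using this
  have hC : Cᵀ * C = 1 := by
    rw [hCdef, Matrix.transpose_fromCols, Matrix.fromRows_mul_fromCols,
      hU, hQ, hQU, hUQ, Matrix.fromBlocks_one]
  have hMskew : Mᵀ = -M := by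
    rw [hMdef, Matrix.fromBlocks_transpose]
    simp [Matrix.fromBlocks_neg, Matrix.transpose_smul, hA, smul_neg]
  have hE1 := exp_skew_orth M hMskew
  have hE2 := exp_skew_orth ((1 - 2 * β) • A) (by rw [Matrix.transpose_smul, hA, smul_neg])
  have hF : Fᵀ * F = 1 := by
    rw [hFdef, Matrix.transpose_fromRows, Matrix.fromCols_mul_fromRows]
    simp
  subst hX
  simp only [Matrix.transpose_mul, Matrix.mul_assoc]
  rw [← Matrix.mul_assoc Cᵀ C, hC, Matrix.one_mul,
    ← Matrix.mul_assoc (NormedSpace.exp M)ᵀ, hE1, Matrix.one_mul,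
    ← Matrix.mul_assoc Fᵀ F, hF, Matrix.one_mul, hE2]
end
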